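/- arXiv:1205.1947 — 2 statements merged into one kernel-verified Lean document; each statement's English description precedes it below -/
import Mathlib

section
/- For all q, ψ ∈ ℝ^{N²}, the Arakawa energy–enstrophy vector field satisfies both orthogonality relations qᵀ J_EZ(q, ψ) = 0 and ψᵀ J_EZ(q, ψ) = 0. In particular the J_EZ semi-discretization preserves both the discrete enstrophy and the discrete energy. -/
open Matrix
open scoped Kronecker

noncomputable section

/-- The `N×N` cyclic shift matrix: `E i j = 1` iff `j ≡ i+1 (mod N)`. -/
def shiftE (N : ℕ) : Matrix (Fin N) (Fin N) ℝ :=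
  Matrix.of fun i j => if ((i : ℕ) + 1) % N = (j : ℕ) then 1 else 0

/-- The grid spacing `δ = 2π/N`. -/
def gridDelta (N : ℕ) : ℝ := 2 * Real.pi / N

/-- The central divided-difference matrix `D = (E - Eᵀ)/(2δ)`. -/
def Dmat (N : ℕ) : Matrix (Fin N) (Fin N) ℝ :=
  (2 * gridDelta N)⁻¹ • (shiftE N - (shiftE N)ᵀ)

/-- `D_x = I ⊗ D`. -/
def Dx (N : ℕ) : Matrix (Fin N × Fin N) (Fin N × Fin N) ℝ :=
  (1 : Matrix (Fin N) (Fin N) ℝ) ⊗ₖ Dmat N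

/-- `D_y = D ⊗ I`. -/
def Dy (N : ℕ) : Matrix (Fin N × Fin N) (Fin N × Fin N) ℝ :=
  Dmat N ⊗ₖ (1 : Matrix (Fin N) (Fin N) ℝ)

/-- `J_0(q, ψ) = (D_x q)∗(D_y ψ) − (D_y q)∗(D_x ψ)` (componentwise products). -/
def J0 (N : ℕ) (q ψ : Fin N × Fin N → ℝ) : Fin N × Fin N → ℝ :=
  (Dx N).mulVec q * (Dy N).mulVec ψ - (Dy N).mulVec q * (Dx N).mulVec ψ

/-- `J_E(q, ψ) = D_x(q ∗ D_y ψ) − D_y(q ∗ D_x ψ)`. -/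
def JE (N : ℕ) (q ψ : Fin N × Fin N → ℝ) : Fin N × Fin N → ℝ :=
  (Dx N).mulVec (q * (Dy N).mulVec ψ) - (Dy N).mulVec (q * (Dx N).mulVec ψ)

/-- `J_Z(q, ψ) = D_y((D_x q) ∗ ψ) − D_x((D_y q) ∗ ψ)`. -/
def JZ (N : ℕ) (q ψ : Fin N × Fin N → ℝ) : Fin N × Fin N → ℝ :=
  (Dy N).mulVec ((Dx N).mulVec q * ψ) - (Dx N).mulVec ((Dy N).mulVec q * ψ)

/-- The Arakawa energy–enstrophy bracket `J_EZ = (J_0 + J_E + J_Z)/3`. -/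
def JEZ (N : ℕ) (q ψ : Fin N × Fin N → ℝ) : Fin N × Fin N → ℝ :=
  (3 : ℝ)⁻¹ • (J0 N q ψ + JE N q ψ + JZ N q ψ)


lemma Dmat_skew (N : ℕ) : (Dmat N)ᵀ = -(Dmat N) := by
  unfold Dmat
  rw [Matrix.transpose_smul, Matrix.transpose_sub, Matrix.transpose_transpose,
    ← smul_neg, neg_sub]

lemma Dx_skew (N : ℕ) : (Dx N)ᵀ = -(Dx N) := by
  unfold Dx
  rw [← Matrix.kroneckerMap_transpose, Matrix.transpose_one, Dmat_skew]
  ext ⟨i, j⟩ ⟨k, l⟩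
  simp [Matrix.kroneckerMap_apply]

lemma Dy_skew (N : ℕ) : (Dy N)ᵀ = -(Dy N) := by
  unfold Dy
  rw [← Matrix.kroneckerMap_transpose, Matrix.transpose_one, Dmat_skew]
  ext ⟨i, j⟩ ⟨k, l⟩
  simp [Matrix.kroneckerMap_apply]

lemma skew_dot {n : Type*} [Fintype n] {A : Matrix n n ℝ} (hA : Aᵀ = -A)
    (v w : n → ℝ) : v ⬝ᵥ A.mulVec w = -(A.mulVec v ⬝ᵥ w) := by
  rw [Matrix.dotProduct_mulVec, ← Matrix.mulVec_transpose, hA, Matrix.neg_mulVec,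
    neg_dotProduct]

lemma dot_mul_comm' {n : Type*} [Fintype n] (u v w : n → ℝ) :
    u ⬝ᵥ (v * w) = v ⬝ᵥ (u * w) := by
  simp only [dotProduct, Pi.mul_apply]
  exact Finset.sum_congr rfl fun i _ => by ring

lemma dot_mul_swap {n : Type*} [Fintype n] (u v w : n → ℝ) :
    u ⬝ᵥ (v * w) = u ⬝ᵥ (w * v) := by
  simp only [dotProduct, Pi.mul_apply]
  exact Finset.sum_congr rfl fun i _ => by ring

/-- the Arakawa energy–enstrophy vector field satisfies both
orthogonality relations `qᵀ J_EZ(q, ψ) = 0` and `ψᵀ J_EZ(q, ψ) = 0`, hence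
preserves both the discrete enstrophy and the discrete energy. -/
theorem JEZ_orthogonal (N : ℕ) (hN : 3 ≤ N) (q ψ : Fin N × Fin N → ℝ) :
    q ⬝ᵥ JEZ N q ψ = 0 ∧ ψ ⬝ᵥ JEZ N q ψ = 0 := by
  constructor
  · simp only [JEZ, J0, JE, JZ, dotProduct_smul, dotProduct_add,
      dotProduct_sub, skew_dot (Dx_skew N), skew_dot (Dy_skew N), smul_eq_mul]
    rw [dot_mul_comm' ((Dx N).mulVec q) q ((Dy N).mulVec ψ),
        dot_mul_comm' ((Dy N).mulVec q) q ((Dx N).mulVec ψ),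
        dot_mul_comm' ((Dy N).mulVec q) ((Dx N).mulVec q) ψ]
    ring
  · simp only [JEZ, J0, JE, JZ, dotProduct_smul, dotProduct_add,
      dotProduct_sub, skew_dot (Dx_skew N), skew_dot (Dy_skew N), smul_eq_mul]
    rw [dot_mul_comm' ((Dx N).mulVec ψ) q ((Dy N).mulVec ψ),
        dot_mul_comm' ((Dy N).mulVec ψ) q ((Dx N).mulVec ψ),
        dot_mul_swap q ((Dy N).mulVec ψ) ((Dx N).mulVec ψ),
        dot_mul_comm' ((Dy N).mulVec ψ) ((Dx N).mulVec q) ψ,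
        dot_mul_comm' ((Dx N).mulVec ψ) ((Dy N).mulVec q) ψ,
        dot_mul_comm' ψ ((Dx N).mulVec q) ((Dy N).mulVec ψ),
        dot_mul_swap ((Dx N).mulVec q) ψ ((Dy N).mulVec ψ),
        dot_mul_comm' ψ ((Dy N).mulVec q) ((Dx N).mulVec ψ),
        dot_mul_swap ((Dy N).mulVec q) ψ ((Dx N).mulVec ψ)]
    ring
end
end

section
/- Let S be a symmetric N²×N² real matrix, h ∈ ℝ^{N²}, and let q : ℝ → ℝ^{N²} be differentiable with q′(t) = J_EZ(q(t), S(q(t) − h)) for all t. Then the discrete energy E(t) = −(δ²/2)(q(t)−h)ᵀ S (q(t)−h), the discrete enstrophy Z(t) = (δ²/2) q(t)ᵀ q(t), and the discrete total circulation C(t) = δ² Σ_i q_i(t) are all constant in t. -/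
open Matrix
open scoped Kronecker

noncomputable section

/-! The difference operators `D_x`, `D_y` are commuting skew-symmetric matrices that annihilate
constants (`E` is the permutation matrix of the cyclic rotation). Moving them across the dot
product, each of `q ⬝ᵥ J_EZ(q, ψ)`, `ψ ⬝ᵥ J_EZ(q, ψ)` and `1 ⬝ᵥ J_EZ(q, ψ)` becomes a sum of
trilinear terms that cancel in pairs. Since `Z' = δ² q ⬝ᵥ q'`, `E' = -δ² ψ ⬝ᵥ q'` (as `S` is
symmetric) and `C' = δ² 1 ⬝ᵥ q'`, all three derivatives vanish. -/

section Arakawa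

variable {n : Type*} [Fintype n]

theorem dotProduct_mulVec_of_transpose_eq_neg {A : Matrix n n ℝ} (hA : Aᵀ = -A) (u v : n → ℝ) :
    u ⬝ᵥ A *ᵥ v = -(A *ᵥ u ⬝ᵥ v) := by
  rw [dotProduct_mulVec, ← mulVec_transpose, hA, neg_mulVec, neg_dotProduct]

theorem dotProduct_mul_left_comm (u v w : n → ℝ) : u ⬝ᵥ (v * w) = v ⬝ᵥ (u * w) := by
  simp only [dotProduct, Pi.mul_apply, mul_left_comm]

theorem dotProduct_mul_swap (u v w : n → ℝ) : u ⬝ᵥ (v * w) = w ⬝ᵥ (v * u) := by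
  simp only [dotProduct, Pi.mul_apply]; exact Finset.sum_congr rfl fun _ _ => by ring

def arakawaJacobian (A B : Matrix n n ℝ) (q ψ : n → ℝ) : n → ℝ :=
  (3 : ℝ)⁻¹ • ((A *ᵥ q * B *ᵥ ψ - B *ᵥ q * A *ᵥ ψ) + (A *ᵥ (q * B *ᵥ ψ) - B *ᵥ (q * A *ᵥ ψ))
    + (B *ᵥ (A *ᵥ q * ψ) - A *ᵥ (B *ᵥ q * ψ)))

variable {A B : Matrix n n ℝ}

theorem dotProduct_arakawaJacobian_left (hA : Aᵀ = -A) (hB : Bᵀ = -B) (q ψ : n → ℝ) :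
    q ⬝ᵥ arakawaJacobian A B q ψ = 0 := by
  simp only [arakawaJacobian, dotProduct_smul, dotProduct_add, dotProduct_sub,
    dotProduct_mulVec_of_transpose_eq_neg hA q, dotProduct_mulVec_of_transpose_eq_neg hB q,
    dotProduct_mul_left_comm q (A *ᵥ q), dotProduct_mul_left_comm q (B *ᵥ q),
    dotProduct_mul_left_comm (B *ᵥ q) (A *ᵥ q)]
  ring

theorem dotProduct_arakawaJacobian_right (hA : Aᵀ = -A) (hB : Bᵀ = -B) (q ψ : n → ℝ) :
    ψ ⬝ᵥ arakawaJacobian A B q ψ = 0 := by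
  simp only [arakawaJacobian, dotProduct_smul, dotProduct_add, dotProduct_sub,
    dotProduct_mulVec_of_transpose_eq_neg hA ψ, dotProduct_mulVec_of_transpose_eq_neg hB ψ,
    dotProduct_mul_swap (B *ᵥ ψ) (A *ᵥ q) ψ, dotProduct_mul_swap (A *ᵥ ψ) (B *ᵥ q) ψ,
    dotProduct_mul_swap (B *ᵥ ψ) q (A *ᵥ ψ)]
  ring

theorem sum_arakawaJacobian (hA : Aᵀ = -A) (hB : Bᵀ = -B) (hAB : A * B = B * A)
    (hA1 : A *ᵥ 1 = 0) (hB1 : B *ᵥ 1 = 0) (q ψ : n → ℝ) :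
    ∑ i, arakawaJacobian A B q ψ i = 0 := by
  have one_dotProduct_mul (u v : n → ℝ) : 1 ⬝ᵥ (u * v) = u ⬝ᵥ v := by
    simp [dotProduct]
  rw [← one_dotProduct]
  simp only [arakawaJacobian, dotProduct_smul, dotProduct_add, dotProduct_sub, one_dotProduct_mul,
    dotProduct_mulVec_of_transpose_eq_neg hA, dotProduct_mulVec_of_transpose_eq_neg hB, hA1, hB1,
    zero_dotProduct, mulVec_mulVec, hAB]
  ring

end Arakawa

theorem shiftE_eq_permMatrix (N : ℕ) : shiftE N = (finRotate N).permMatrix ℝ := by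
  ext i j
  simp [shiftE, PEquiv.toMatrix_apply, finRotate_apply, Fin.ext_iff, Fin.val_add]

theorem Dmat_transpose (N : ℕ) : (Dmat N)ᵀ = -Dmat N := by
  rw [Dmat, transpose_smul, transpose_sub, transpose_transpose, ← smul_neg, neg_sub]

theorem Dmat_mulVec_one (N : ℕ) : Dmat N *ᵥ 1 = 0 := by
  rw [Dmat, smul_mulVec, sub_mulVec, mulVec_transpose, shiftE_eq_permMatrix, permMatrix_mulVec,
    vecMul_permMatrix]
  simp

theorem Dx_transpose (N : ℕ) : (Dx N)ᵀ = -Dx N := by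
  rw [Dx, ← kroneckerMap_transpose, transpose_one, Dmat_transpose]
  ext
  simp

theorem Dy_transpose (N : ℕ) : (Dy N)ᵀ = -Dy N := by
  rw [Dy, ← kroneckerMap_transpose, transpose_one, Dmat_transpose]
  ext
  simp

theorem Dx_mul_Dy (N : ℕ) : Dx N * Dy N = Dy N * Dx N := by
  rw [Dx, Dy, ← mul_kronecker_mul, ← mul_kronecker_mul, one_mul, mul_one]

theorem Dx_mulVec_one (N : ℕ) : Dx N *ᵥ 1 = 0 := by
  ext ⟨i, j⟩
  simpa [Dx, mulVec, dotProduct, Fintype.sum_prod_type, one_apply] using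
    congrFun (Dmat_mulVec_one N) j

theorem Dy_mulVec_one (N : ℕ) : Dy N *ᵥ 1 = 0 := by
  ext ⟨i, j⟩
  simpa [Dy, mulVec, dotProduct, Fintype.sum_prod_type, one_apply, ← Finset.sum_mul] using
    congrFun (Dmat_mulVec_one N) i

section Conservation

variable {n : Type*} [Fintype n]

theorem HasDerivAt.dotProduct {f g : ℝ → n → ℝ} {f' g' : n → ℝ} {t : ℝ}
    (hf : HasDerivAt f f' t) (hg : HasDerivAt g g' t) :
    HasDerivAt (fun s => f s ⬝ᵥ g s) (f' ⬝ᵥ g t + f t ⬝ᵥ g') t := by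
  have hsum : HasDerivAt (fun s => ∑ i, f s i * g s i) (∑ i, (f' i * g t i + f t i * g' i)) t :=
    .fun_sum fun i _ => (hasDerivAt_pi.1 hf i).mul (hasDerivAt_pi.1 hg i)
  simpa only [_root_.dotProduct, Finset.sum_add_distrib] using hsum

theorem HasDerivAt.mulVec (M : Matrix n n ℝ) {u : ℝ → n → ℝ} {u' : n → ℝ} {t : ℝ}
    (hu : HasDerivAt u u' t) : HasDerivAt (fun s => M *ᵥ u s) (M *ᵥ u') t :=
  (M.mulVecLin.toContinuousLinearMap.hasFDerivAt.comp_hasDerivAt t hu :)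

theorem dotProduct_mulVec_eq_of_hasDerivAt {S : Matrix n n ℝ} (hS : Sᵀ = S) {u u' : ℝ → n → ℝ}
    (hu : ∀ t, HasDerivAt u (u' t) t) (horth : ∀ t, S *ᵥ u t ⬝ᵥ u' t = 0) (t s : ℝ) :
    u t ⬝ᵥ S *ᵥ u t = u s ⬝ᵥ S *ᵥ u s := by
  have hderiv : ∀ t, HasDerivAt (fun s => u s ⬝ᵥ S *ᵥ u s) 0 t := fun t => by
    have hsymm : u t ⬝ᵥ S *ᵥ u' t = S *ᵥ u t ⬝ᵥ u' t := by
      rw [dotProduct_mulVec, ← mulVec_transpose, hS, dotProduct_comm]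
    convert (hu t).dotProduct ((hu t).mulVec S) using 1
    rw [dotProduct_comm, hsymm, horth, add_zero]
  exact is_const_of_deriv_eq_zero (fun t => (hderiv t).differentiableAt)
    (fun t => (hderiv t).deriv) t s

theorem sum_eq_of_hasDerivAt {u u' : ℝ → n → ℝ} (hu : ∀ t, HasDerivAt u (u' t) t)
    (hsum : ∀ t, ∑ i, u' t i = 0) (t s : ℝ) : ∑ i, u t i = ∑ i, u s i := by
  have hderiv : ∀ t, HasDerivAt (fun s => ∑ i, u s i) 0 t := fun t => by
    simpa only [hsum] using
      HasDerivAt.fun_sum (u := Finset.univ) fun i _ => hasDerivAt_pi.1 (hu t) i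
  exact is_const_of_deriv_eq_zero (fun t => (hderiv t).differentiableAt)
    (fun t => (hderiv t).deriv) t s

end Conservation

theorem JEZ_eq_arakawaJacobian (N : ℕ) (q ψ : Fin N × Fin N → ℝ) :
    JEZ N q ψ = arakawaJacobian (Dx N) (Dy N) q ψ :=
  rfl

theorem JEZ_flow_conserves_energy_enstrophy_circulation_general (N : ℕ)
    (S : Matrix (Fin N × Fin N) (Fin N × Fin N) ℝ) (hSsymm : Sᵀ = S)
    (h : Fin N × Fin N → ℝ)
    (q : ℝ → (Fin N × Fin N → ℝ))
    (hq : ∀ t : ℝ, HasDerivAt q (JEZ N (q t) (S.mulVec (q t - h))) t) :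
    (∀ t s : ℝ,
        -(gridDelta N ^ 2 / 2) * ((q t - h) ⬝ᵥ S.mulVec (q t - h))
          = -(gridDelta N ^ 2 / 2) * ((q s - h) ⬝ᵥ S.mulVec (q s - h))) ∧
    (∀ t s : ℝ,
        gridDelta N ^ 2 / 2 * (q t ⬝ᵥ q t) = gridDelta N ^ 2 / 2 * (q s ⬝ᵥ q s)) ∧
    (∀ t s : ℝ,
        gridDelta N ^ 2 * ∑ i, q t i = gridDelta N ^ 2 * ∑ i, q s i) := by
  simp only [JEZ_eq_arakawaJacobian] at hq
  have hDx := Dx_transpose N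
  have hDy := Dy_transpose N
  refine ⟨fun t s => ?energy, fun t s => ?enstrophy, fun t s => ?circulation⟩
  case energy =>
    rw [dotProduct_mulVec_eq_of_hasDerivAt hSsymm (fun t => (hq t).sub_const h)
      (fun t => dotProduct_arakawaJacobian_right hDx hDy _ _) t s]
  case enstrophy =>
    have hconst := dotProduct_mulVec_eq_of_hasDerivAt transpose_one hq
      (fun t => by rw [one_mulVec]; exact dotProduct_arakawaJacobian_left hDx hDy _ _) t s
    rw [one_mulVec, one_mulVec] at hconst
    rw [hconst]
  case circulation =>
    rw [sum_eq_of_hasDerivAt hq (fun t => sum_arakawaJacobian hDx hDy (Dx_mul_Dy N)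
      (Dx_mulVec_one N) (Dy_mulVec_one N) _ _) t s]

/-- along any solution of `q′ = J_EZ(q, S(q−h))` with `S`
symmetric, the discrete energy `E(t) = −(δ²/2)(q−h)ᵀS(q−h)`, the discrete
enstrophy `Z(t) = (δ²/2) qᵀq` and the discrete total circulation
`C(t) = δ² Σ_i q_i` are all constant in time. -/
theorem JEZ_flow_conserves_energy_enstrophy_circulation (N : ℕ) (hN : 3 ≤ N)
    (S : Matrix (Fin N × Fin N) (Fin N × Fin N) ℝ) (hSsymm : Sᵀ = S)
    (h : Fin N × Fin N → ℝ)
    (q : ℝ → (Fin N × Fin N → ℝ))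
    (hq : ∀ t : ℝ, HasDerivAt q (JEZ N (q t) (S.mulVec (q t - h))) t) :
    (∀ t s : ℝ,
        -(gridDelta N ^ 2 / 2) * ((q t - h) ⬝ᵥ S.mulVec (q t - h))
          = -(gridDelta N ^ 2 / 2) * ((q s - h) ⬝ᵥ S.mulVec (q s - h))) ∧
    (∀ t s : ℝ,
        gridDelta N ^ 2 / 2 * (q t ⬝ᵥ q t) = gridDelta N ^ 2 / 2 * (q s ⬝ᵥ q s)) ∧
    (∀ t s : ℝ,
        gridDelta N ^ 2 * ∑ i, q t i = gridDelta N ^ 2 * ∑ i, q s i) :=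
  JEZ_flow_conserves_energy_enstrophy_circulation_general N S hSsymm h q hq
end
end
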